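/- arXiv:2209.03835 — 9 statements merged into one kernel-verified Lean document; each statement's English description precedes it below -/
import Mathlib

section
/- Let G=(V,E) be a simple directed graph on V=[p] containing all self-loops, and let C be any symmetric positive definite p×p real matrix. Then the graphical continuous Lyapunov model M_{G,C} is globally identifiable; equivalently, if M₁,M₂ ∈ ℝ^E are stable and a positive definite matrix Σ satisfies both M₁Σ+ΣM₁^⊤+C=0 and M₂Σ+ΣM₂^⊤+C=0, then M₁=M₂. -/
/-!
If `M₁ * S + S * M₁ᵀ + C = 0 = M₂ * S + S * M₂ᵀ + C`, the difference
`D = M₁ - M₂` makes `K = D * S` skew-symmetric. Writing `S⁻¹ = R * R` with `R`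
symmetric, `D = K * R * R` has the same trace of its square as the skew-symmetric
matrix `R * K * R`, so `trace (D * D) ≤ 0`, with equality only for `D = 0`.
On a simple graph `D i j * D j i = 0` off the diagonal, so
`trace (D * D) = ∑ i, D i i ^ 2 ≥ 0`.
-/

open Matrix MeasureTheory

/-- A real square matrix is *stable* if every eigenvalue (over `ℂ`) has strictly
negative real part. -/
def IsStableMat {n : Type*} [Fintype n] [DecidableEq n] (M : Matrix n n ℝ) : Prop :=
  ∀ μ ∈ spectrum ℂ (M.map (algebraMap ℝ ℂ)), μ.re < 0

/-- `M ∈ ℝ^E`: the matrix `M` is supported on the directed graph with edge set `E`,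
i.e. `M j i = 0` whenever `(i, j) ∉ E`. -/
def InSupp {n : Type*} (E : Set (n × n)) (M : Matrix n n ℝ) : Prop :=
  ∀ i j : n, (i, j) ∉ E → M j i = 0

/-- The graphical continuous Lyapunov model `M_{G,C}`: positive definite matrices `S`
such that `M * S + S * Mᵀ + C = 0` for some `M ∈ ℝ^E`. -/
def LyapModel {n : Type*} [Fintype n] [DecidableEq n] (E : Set (n × n))
    (C : Matrix n n ℝ) : Set (Matrix n n ℝ) :=
  {S | S.PosDef ∧ ∃ M : Matrix n n ℝ, InSupp E M ∧ M * S + S * Mᵀ + C = 0}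

/-- Global identifiability: no two stable matrices supported on `E` yield the same
solution of the Lyapunov equation.  (Since for stable `M` the Lyapunov equation has a
unique positive definite solution `Σ(M,C)`, this is equivalent to every fiber
`F_{G,C}(M₀)` being the singleton `{M₀}`.) -/
def GloballyIdentifiable {n : Type*} [Fintype n] [DecidableEq n] (E : Set (n × n))
    (C : Matrix n n ℝ) : Prop :=
  ∀ M₁ M₂ : Matrix n n ℝ,
    InSupp E M₁ → IsStableMat M₁ → InSupp E M₂ → IsStableMat M₂ →
    ∀ S : Matrix n n ℝ, S.PosDef →
      M₁ * S + S * M₁ᵀ + C = 0 → M₂ * S + S * M₂ᵀ + C = 0 → M₁ = M₂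

/-- A directed graph is *simple* if it has no 2-cycles between distinct nodes. -/
def IsSimpleDigraph {n : Type*} (E : Set (n × n)) : Prop :=
  ∀ i j : n, i ≠ j → (i, j) ∈ E → (j, i) ∉ E

/-- The fiber `F_{G,C}(M₀)`: all stable matrices supported on `E` whose Lyapunov
solution coincides with that of `M₀`, i.e. some positive definite `S` solves the
Lyapunov equation for both `M₀` and `M`. -/
def Fiber {n : Type*} [Fintype n] [DecidableEq n] (E : Set (n × n))
    (C M₀ : Matrix n n ℝ) : Set (Matrix n n ℝ) :=
  {M | InSupp E M ∧ IsStableMat M ∧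
    ∃ S : Matrix n n ℝ, S.PosDef ∧ M₀ * S + S * M₀ᵀ + C = 0 ∧ M * S + S * Mᵀ + C = 0}

/-- The identification of the coordinate space `ℝ^{|E|}` with the matrices in `ℝ^E`:
the coordinate attached to an edge `(i,j)` is the entry `M j i`. -/
def edgeMatrix {p : ℕ} (E : Finset (Fin p × Fin p)) (f : E → ℝ) :
    Matrix (Fin p) (Fin p) ℝ :=
  fun j i => if h : (i, j) ∈ E then f ⟨(i, j), h⟩ else 0

/-- Generic identifiability: the set of parameter vectors `f ∈ ℝ^{|E|}` whose matrix
is stable but whose fiber is not a singleton is a Lebesgue null set. -/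
def GenericallyIdentifiable {p : ℕ} (E : Finset (Fin p × Fin p))
    (C : Matrix (Fin p) (Fin p) ℝ) : Prop :=
  volume {f : E → ℝ | IsStableMat (edgeMatrix E f) ∧
    Fiber (E : Set (Fin p × Fin p)) C (edgeMatrix E f) ≠ {edgeMatrix E f}} = 0

namespace Matrix

variable {n : Type*} [Fintype n]

theorem trace_mul_self_eq_sum_sq_diag {R : Type*} [Semiring R] {D : Matrix n n R}
    (hD : ∀ i j, i ≠ j → D i j * D j i = 0) : trace (D * D) = ∑ i, D i i ^ 2 := by
  refine Finset.sum_congr rfl fun i _ => ?_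
  rw [diag_apply, mul_apply, Finset.sum_eq_single i (fun j _ hji => hD i j hji.symm)
    (absurd (Finset.mem_univ i)), sq]

theorem eq_zero_of_transpose_eq_neg_of_trace_mul_self_nonneg {A : Matrix n n ℝ}
    (hA : Aᵀ = -A) (htr : 0 ≤ trace (A * A)) : A = 0 := by
  have hneg : trace (A * A) = -trace (Aᴴ * A) := by
    rw [conjTranspose_eq_transpose_of_trivial, hA, neg_mul, trace_neg, neg_neg]
  have hnonneg : 0 ≤ trace (Aᴴ * A) := (posSemidef_conjTranspose_mul_self A).trace_nonneg
  exact trace_conjTranspose_mul_self_eq_zero_iff.mp (by linarith)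

open scoped MatrixOrder in
theorem eq_zero_of_mul_add_mul_transpose_eq_zero_of_trace_mul_self_nonneg [DecidableEq n]
    {S D : Matrix n n ℝ} (hS : S.PosDef) (hD : D * S + S * Dᵀ = 0) (htr : 0 ≤ trace (D * D)) :
    D = 0 := by
  set K := D * S
  set R := CFC.sqrt S⁻¹
  have hSsymm : Sᵀ = S := by simpa using hS.isHermitian.eq
  have hRsymm : Rᵀ = R := by simpa using (CFC.sqrt_nonneg S⁻¹).posSemidef.isHermitian.eq
  have hRR : R * R = S⁻¹ := CFC.sqrt_mul_sqrt_self _ hS.inv.posSemidef.nonneg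
  have hSinv : S * S⁻¹ = 1 := mul_nonsing_inv S ((isUnit_iff_isUnit_det S).mp hS.isUnit)
  have hK : Kᵀ = -K := by
    rw [transpose_mul, hSsymm, eq_neg_iff_add_eq_zero, add_comm, hD]
  have hDK : D = K * R * R := by
    rw [mul_assoc K, hRR, mul_assoc, hSinv, mul_one]
  have hA : (R * K * R)ᵀ = -(R * K * R) := by
    simp only [transpose_mul, hRsymm, hK, mul_neg, neg_mul, mul_assoc]
  have htrA : trace (D * D) = trace (R * K * R * (R * K * R)) := by
    rw [hDK, ← trace_mul_cycle]
    simp only [mul_assoc]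
  have hRKR : R * K * R = 0 :=
    eq_zero_of_transpose_eq_neg_of_trace_mul_self_nonneg hA (htrA ▸ htr)
  calc D = S * S⁻¹ * D := by rw [hSinv, one_mul]
    _ = S * (R * (R * K * R) * R) := by
        rw [← hRR, hDK]
        simp only [mul_assoc]
    _ = 0 := by rw [hRKR, mul_zero, zero_mul, mul_zero]

end Matrix

section InSupp

variable {n : Type*} {E : Set (n × n)} {M₁ M₂ : Matrix n n ℝ}

theorem InSupp.sub (h₁ : InSupp E M₁) (h₂ : InSupp E M₂) : InSupp E (M₁ - M₂) :=
  fun i j hij => by rw [Matrix.sub_apply, h₁ i j hij, h₂ i j hij, sub_zero]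

theorem InSupp.mul_swap_eq_zero {M : Matrix n n ℝ} (hM : InSupp E M) (hE : IsSimpleDigraph E)
    {i j : n} (hij : i ≠ j) : M i j * M j i = 0 := by
  by_cases hji : (j, i) ∈ E
  · rw [hM i j (hE j i hij.symm hji), mul_zero]
  · rw [hM j i hji, zero_mul]

end InSupp

theorem simple_graph_globally_identifiable_general {p : ℕ}
    (E : Set (Fin p × Fin p))
    (hsimple : IsSimpleDigraph E)
    (C : Matrix (Fin p) (Fin p) ℝ) :
    GloballyIdentifiable E C := by
  intro M₁ M₂ h₁ _ h₂ _ S hS e₁ e₂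
  have hD : (M₁ - M₂) * S + S * (M₁ - M₂)ᵀ = 0 :=
    calc _ = (M₁ * S + S * M₁ᵀ + C) - (M₂ * S + S * M₂ᵀ + C) := by
          simp only [sub_mul, mul_sub, transpose_sub]; abel
      _ = 0 := by rw [e₁, e₂, sub_zero]
  refine sub_eq_zero.mp
    (eq_zero_of_mul_add_mul_transpose_eq_zero_of_trace_mul_self_nonneg hS hD ?_)
  rw [trace_mul_self_eq_sum_sq_diag fun i j hij => (h₁.sub h₂).mul_swap_eq_zero hsimple hij]
  positivity

/-- simple graphs (with all self-loops) give globally identifiable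
graphical continuous Lyapunov models, for every symmetric positive definite `C`. -/
theorem simple_graph_globally_identifiable {p : ℕ}
    (E : Set (Fin p × Fin p)) (hloops : ∀ i : Fin p, (i, i) ∈ E)
    (hsimple : IsSimpleDigraph E)
    (C : Matrix (Fin p) (Fin p) ℝ) (hC : C.PosDef) :
    GloballyIdentifiable E C :=
  simple_graph_globally_identifiable_general E hsimple C
end

section
/- Let G=(V,E) be a directed graph on V=[p] containing all self-loops, and let C be a diagonal positive definite p×p real matrix. Then the graphical continuous Lyapunov model M_{G,C} is globally identifiable if and only if G is simple. -/
open Matrix MeasureTheory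

/-! If `G` is simple, the difference `Δ = M₁ - M₂` of two matrices supported on `G` with the
same Lyapunov solution `Σ` satisfies `ΔΣ + ΣΔᵀ = 0` and `Δ i j * Δ j i = 0` for `i ≠ j`.
Writing `Σ = BᵀB`, the first identity makes `T = BΔᵀB⁻¹` skew-symmetric, so
`tr (Δ²) = tr (T²) = -tr (TTᵀ) ≤ 0`, while the second gives `tr (Δ²) = ∑ i, Δ i i ^ 2 ≥ 0`;
hence `T = 0` and `Δ = 0`.

Conversely, a 2-cycle `i ⇄ j` gives the nonzero skew-symmetric matrix `K = E_ji - E_ij`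
supported on `G`. Both `-C/2` and `-C/2 + K` are supported on `G` (as `C` is diagonal and
`G` has all self-loops), satisfy `M + Mᵀ = -C`, hence are stable, and solve the
Lyapunov equation with `Σ = 1`. -/

open scoped ComplexOrder MatrixOrder

namespace Matrix

variable {n : Type*}

lemma conjTranspose_map_ofReal (M : Matrix n n ℝ) :
    (M.map (algebraMap ℝ ℂ))ᴴ = Mᵀ.map (algebraMap ℝ ℂ) := by
  rw [← conjTranspose_map _ (fun _ => by simp), conjTranspose_eq_transpose_of_trivial]

variable [Fintype n]

lemma PosDef.exists_isUnit_eq_transpose_mul [DecidableEq n] {S : Matrix n n ℝ}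
    (hS : S.PosDef) : ∃ B : Matrix n n ℝ, IsUnit B ∧ S = Bᵀ * B :=
  CStarAlgebra.isStrictlyPositive_iff_eq_star_mul_self.mp hS.isStrictlyPositive

lemma PosDef.map_ofReal [DecidableEq n] {S : Matrix n n ℝ} (hS : S.PosDef) :
    (S.map (algebraMap ℝ ℂ)).PosDef := by
  obtain ⟨B, hB, rfl⟩ := hS.exists_isUnit_eq_transpose_mul
  have hconj : (Bᵀ * B).map (algebraMap ℝ ℂ) =
      star (B.map (algebraMap ℝ ℂ)) * 1 * B.map (algebraMap ℝ ℂ) := by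
    rw [Matrix.mul_one, Matrix.map_mul, star_eq_conjTranspose, conjTranspose_map_ofReal]
  have hBℂ : IsUnit (B.map (algebraMap ℝ ℂ)) := hB.map (algebraMap ℝ ℂ).mapMatrix
  rw [hconj, IsUnit.posDef_star_left_conjugate_iff hBℂ]
  exact PosDef.one

lemma trace_mul_self_eq_sum_sq {R : Type*} [Semiring R] {Δ : Matrix n n R}
    (h : ∀ i j, i ≠ j → Δ i j * Δ j i = 0) : trace (Δ * Δ) = ∑ i, Δ i i ^ 2 := by
  refine Finset.sum_congr rfl fun i _ => ?_
  rw [diag_apply, mul_apply, Finset.sum_eq_single i (fun j _ hji => h i j hji.symm) (by simp), sq]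

lemma transpose_units_conj_eq_neg_of_mul_add_mul_transpose_eq_zero {R : Type*} [CommRing R]
    [DecidableEq n] (B : (Matrix n n R)ˣ) {Δ : Matrix n n R}
    (h : Δ * ((B : Matrix n n R)ᵀ * B) + ((B : Matrix n n R)ᵀ * B) * Δᵀ = 0) :
    ((B : Matrix n n R) * Δᵀ * (↑B⁻¹ : Matrix n n R))ᵀ =
      -((B : Matrix n n R) * Δᵀ * (↑B⁻¹ : Matrix n n R)) := by
  have h' := congr((↑B⁻¹ : Matrix n n R)ᵀ * $h * (↑B⁻¹ : Matrix n n R))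
  rw [Matrix.mul_zero, Matrix.zero_mul, Matrix.mul_add, Matrix.add_mul] at h'
  rw [transpose_mul, transpose_mul, transpose_transpose, ← Matrix.mul_assoc,
    eq_neg_iff_add_eq_zero]
  convert h' using 2
  · simp only [Matrix.mul_assoc, Units.mul_inv, Matrix.mul_one]
  · simp only [← Matrix.mul_assoc, ← transpose_mul, Units.mul_inv, transpose_one,
      Matrix.one_mul]

theorem eq_zero_of_mul_add_mul_transpose_eq_zero [DecidableEq n] {S Δ : Matrix n n ℝ}
    (hS : S.PosDef) (hΔ : Δ * S + S * Δᵀ = 0)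
    (hprod : ∀ i j, i ≠ j → Δ i j * Δ j i = 0) : Δ = 0 := by
  obtain ⟨B, hB, rfl⟩ := hS.exists_isUnit_eq_transpose_mul
  lift B to (Matrix n n ℝ)ˣ using hB
  set T := (B : Matrix n n ℝ) * Δᵀ * (↑B⁻¹ : Matrix n n ℝ)
  have htrace : trace (T * Tᵀ) = -∑ i, Δ i i ^ 2 := by
    have hTT : T * T = (B : Matrix n n ℝ) * (Δ * Δ)ᵀ * (↑B⁻¹ : Matrix n n ℝ) := by
      simp only [T, transpose_mul, Matrix.mul_assoc, Units.inv_mul_cancel_left]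
    rw [transpose_units_conj_eq_neg_of_mul_add_mul_transpose_eq_zero B hΔ, Matrix.mul_neg,
      trace_neg, hTT, trace_units_conj, trace_transpose, trace_mul_self_eq_sum_sq hprod]
  have hT : T = 0 := by
    have hnonneg := (posSemidef_self_mul_conjTranspose T).trace_nonneg
    rw [conjTranspose_eq_transpose_of_trivial, htrace] at hnonneg
    have hsum : ∑ i, Δ i i ^ 2 = 0 :=
      le_antisymm (neg_nonneg.mp hnonneg) (Finset.sum_nonneg fun i _ => sq_nonneg _)
    rw [← trace_mul_conjTranspose_self_eq_zero_iff, conjTranspose_eq_transpose_of_trivial,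
      htrace, hsum, neg_zero]
  rwa [Units.mul_left_eq_zero, Units.mul_right_eq_zero, transpose_eq_zero] at hT

end Matrix

namespace InSupp

variable {n : Type*} {E : Set (n × n)} {M N : Matrix n n ℝ}

lemma add (hM : InSupp E M) (hN : InSupp E N) : InSupp E (M + N) := fun i j hij => by
  rw [Matrix.add_apply, hM i j hij, hN i j hij, add_zero]

lemma sub_s1 (hM : InSupp E M) (hN : InSupp E N) : InSupp E (M - N) := fun i j hij => by
  rw [Matrix.sub_apply, hM i j hij, hN i j hij, sub_zero]

lemma smul (c : ℝ) (hM : InSupp E M) : InSupp E (c • M) := fun i j hij => by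
  rw [Matrix.smul_apply, hM i j hij, smul_zero]

lemma single [DecidableEq n] {i j : n} (hij : (i, j) ∈ E) (c : ℝ) :
    InSupp E (single j i c) := fun _ _ hab => by
  rw [single_apply_of_ne]
  rintro ⟨rfl, rfl⟩
  exact hab hij

lemma apply_mul_apply_swap_eq_zero (hE : IsSimpleDigraph E) (hM : InSupp E M) {i j : n}
    (hij : i ≠ j) : M i j * M j i = 0 := by
  by_cases hijE : (i, j) ∈ E
  · rw [hM j i (hE i j hij hijE), zero_mul]
  · rw [hM i j hijE, mul_zero]

end InSupp

section

variable {n : Type*} [Fintype n] [DecidableEq n]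

theorem isStableMat_of_posDef_neg_add_transpose {M : Matrix n n ℝ}
    (hM : (-(M + Mᵀ)).PosDef) : IsStableMat M := by
  intro μ hμ
  set A := M.map (algebraMap ℝ ℂ)
  obtain ⟨v, hv⟩ := (Module.End.hasEigenvalue_iff_mem_spectrum.mpr
    ((spectrum_toLin' A).symm ▸ hμ)).exists_hasEigenvector
  have hAv : A *ᵥ v = μ • v := by simpa using hv.apply_eq_smul
  have hquad : star v ⬝ᵥ ((-(M + Mᵀ)).map (algebraMap ℝ ℂ) *ᵥ v) =
      ((-(2 * μ.re) : ℝ) : ℂ) * (star v ⬝ᵥ v) := by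
    have hAH : star v ⬝ᵥ (Aᴴ *ᵥ v) = star (star v ⬝ᵥ (A *ᵥ v)) := by
      rw [dotProduct_mulVec, ← star_mulVec, star_dotProduct]
    have hmap : (-(M + Mᵀ)).map (algebraMap ℝ ℂ) = -(A + Aᴴ) := by
      rw [conjTranspose_map_ofReal, Matrix.map_neg _ (map_neg _), Matrix.map_add _ (map_add _)]
    rw [hmap, neg_mulVec, add_mulVec, dotProduct_neg, dotProduct_add, hAH, hAv, dotProduct_smul,
      smul_eq_mul, star_mul', ← star_dotProduct, ← add_mul, Complex.star_def, Complex.add_conj]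
    push_cast
    ring
  have hpos := hM.map_ofReal.dotProduct_mulVec_pos hv.2
  rw [hquad] at hpos
  have := Complex.zero_lt_real.mp
    (pos_of_mul_pos_left hpos (dotProduct_star_self_pos_iff.mpr hv.2).le)
  linarith

lemma GloballyIdentifiable.eq_zero_of_transpose_eq_neg {E : Set (n × n)} {C K : Matrix n n ℝ}
    (hGI : GloballyIdentifiable E C) (hC : C.PosDef) (hCE : InSupp E C)
    (hKE : InSupp E K) (hK : Kᵀ = -K) : K = 0 := by
  have hCT : Cᵀ = C := by rw [← conjTranspose_eq_transpose_of_trivial]; exact hC.1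
  have hsym : ∀ K' : Matrix n n ℝ, K'ᵀ = -K' →
      -((-(1/2 : ℝ) • C + K') + (-(1/2 : ℝ) • C + K')ᵀ) = C := by
    intro K' hK'
    rw [transpose_add, hK', transpose_smul, hCT]
    module
  have hlyap : ∀ K' : Matrix n n ℝ, K'ᵀ = -K' →
      (-(1/2 : ℝ) • C + K') * 1 + 1 * (-(1/2 : ℝ) • C + K')ᵀ + C = 0 := by
    intro K' hK'
    rw [Matrix.mul_one, Matrix.one_mul, ← neg_eq_iff_add_eq_zero]
    exact hsym K' hK'
  have hstable : ∀ K' : Matrix n n ℝ, K'ᵀ = -K' → IsStableMat (-(1/2 : ℝ) • C + K') :=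
    fun K' hK' => isStableMat_of_posDef_neg_add_transpose (by rw [hsym K' hK']; exact hC)
  have h0 : (0 : Matrix n n ℝ)ᵀ = -0 := by simp
  have hfiber := hGI _ _ ((hCE.smul _).add fun _ _ _ => rfl) (hstable 0 h0)
    ((hCE.smul _).add hKE) (hstable K hK) 1 PosDef.one (hlyap 0 h0) (hlyap K hK)
  exact (add_left_cancel hfiber).symm

end

/-- for diagonal positive definite `C`, the model `M_{G,C}` is globally
identifiable if and only if `G` is simple. -/
theorem globally_identifiable_iff_simple_of_diagonal {p : ℕ}
    (E : Set (Fin p × Fin p)) (hloops : ∀ i : Fin p, (i, i) ∈ E)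
    (C : Matrix (Fin p) (Fin p) ℝ) (hC : C.PosDef)
    (hdiag : ∀ i j : Fin p, i ≠ j → C i j = 0) :
    GloballyIdentifiable E C ↔ IsSimpleDigraph E := by
  have hCE : InSupp E C := fun i j hij => hdiag j i fun hji => hij (hji ▸ hloops i)
  refine ⟨fun hGI i j hij hijE hjiE => ?_,
    fun hE M₁ M₂ hM₁ _ hM₂ _ S hS h₁ h₂ => ?_⟩
  · have hK := hGI.eq_zero_of_transpose_eq_neg hC hCE
      ((InSupp.single hijE 1).sub_s1 (InSupp.single hjiE 1)) (by simp [transpose_single])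
    simpa [hij] using congr_fun₂ hK j i
  · refine sub_eq_zero.mp (eq_zero_of_mul_add_mul_transpose_eq_zero hS ?_
      fun i j hij => (hM₁.sub_s1 hM₂).apply_mul_apply_swap_eq_zero hE hij)
    rw [transpose_sub, sub_mul, mul_sub, ← sub_eq_zero.mpr (h₁.trans h₂.symm)]
    abel
end

section
/- Let G=(V,E) be a complete directed acyclic graph on V=[p] containing all self-loops, i.e., a DAG in which for every pair of distinct nodes i,j exactly one of the edges (i,j), (j,i) belongs to E. Then for every symmetric positive definite p×p matrix C, the graphical continuous Lyapunov model satisfies M_{G,C} = PD_p, the set of all symmetric positive definite p×p matrices. -/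
open Matrix MeasureTheory

/-!
A complete DAG is the same thing as a strict total order on the nodes, and `ℝ^E` then contains
every matrix that is lower triangular for that order. Given `Σ ≻ 0`, take its LDL decomposition
`Σ = L D Lᵀ` and split the symmetric matrix `-L⁻¹ C L⁻ᵀ` as `A + Aᵀ` with `A` lower triangular.
Then `M = L A D⁻¹ L⁻¹` is lower triangular and `M Σ = L A Lᵀ`, so
`M Σ + Σ Mᵀ = L (A + Aᵀ) Lᵀ = -C`.
-/

section CompleteDAG

variable {n : Type*}

def edgeRel (E : Set (n × n)) (a b : n) : Prop := (a, b) ∈ E ∧ a ≠ b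

theorem isStrictTotalOrder_edgeRel {E : Set (n × n)}
    (hacyc : ∀ i, ¬ Relation.TransGen (edgeRel E) i i)
    (htot : ∀ i j, i ≠ j → (i, j) ∈ E ∨ (j, i) ∈ E) :
    IsStrictTotalOrder n (edgeRel E) where
  irrefl _ h := h.2 rfl
  trans a b c hab hbc := by
    have hac : a ≠ c := by
      rintro rfl
      exact hacyc a (.tail (.single hab) hbc)
    refine ⟨(htot a c hac).resolve_right fun hca => ?_, hac⟩
    exact hacyc a (.tail (.tail (.single hab) hbc) ⟨hca, hac.symm⟩)
  trichotomous a b hab hba := by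
    by_contra hne
    rcases htot a b hne with h | h
    · exact hab ⟨h, hne⟩
    · exact hba ⟨h, Ne.symm hne⟩

end CompleteDAG

section LowerHalf

variable {n K : Type*} [LinearOrder n] [DivisionSemiring K]

def lowerHalf (X : Matrix n n K) : Matrix n n K :=
  of fun i j => if j < i then X i j else if i = j then X i i / 2 else 0

theorem lowerHalf_add_transpose [NeZero (2 : K)] {X : Matrix n n K} (hX : X.IsSymm) :
    lowerHalf X + (lowerHalf X)ᵀ = X := by
  ext i j
  rcases lt_trichotomy i j with h | rfl | h
  · simp [lowerHalf, h, h.ne, not_lt_of_gt h, hX.apply i j]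
  · simp [lowerHalf]
  · simp [lowerHalf, h, h.ne, not_lt_of_gt h]

theorem blockTriangular_lowerHalf (X : Matrix n n K) :
    (lowerHalf X).BlockTriangular OrderDual.toDual := by
  intro i j (h : i < j)
  simp [lowerHalf, not_lt_of_gt h, h.ne]

end LowerHalf

theorem lyapunov_conj_eq {n R : Type*} [Fintype n] [DecidableEq n] [CommRing R]
    {L D S : Matrix n n R} (A : Matrix n n R) [Invertible L] [Invertible D]
    (hS : L * D * Lᵀ = S) (hD : D.IsSymm) :
    (L * A * D⁻¹ * L⁻¹) * S + S * (L * A * D⁻¹ * L⁻¹)ᵀ = L * (A + Aᵀ) * Lᵀ := by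
  have hSsymm : Sᵀ = S := by
    rw [← hS, transpose_mul, transpose_mul, transpose_transpose, hD.eq, Matrix.mul_assoc]
  have hMS : (L * A * D⁻¹ * L⁻¹) * S = L * A * Lᵀ := by
    simp [← hS, Matrix.mul_assoc]
  rw [← hSsymm, ← transpose_mul, hSsymm, hMS]
  simp [Matrix.mul_add, Matrix.add_mul, transpose_mul, Matrix.mul_assoc]

theorem exists_lowerTriangular_lyapunov {n : Type*} [Fintype n] [LinearOrder n]
    {S : Matrix n n ℝ} (hS : S.PosDef) {C : Matrix n n ℝ} (hC : C.IsSymm) :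
    ∃ M : Matrix n n ℝ, M.BlockTriangular OrderDual.toDual ∧ M * S + S * Mᵀ + C = 0 := by
  let _ : LocallyFiniteOrderBot n := .ofIic' n (fun a => {x | x ≤ a}) (by simp)
  set B := LDL.lowerInv hS
  set D := LDL.diag hS
  have hB : B.BlockTriangular OrderDual.toDual := fun _ _ h => LDL.lowerInv_triangular hS h
  have hBSB : B * S * Bᵀ = D := (LDL.diag_eq_lowerInv_conj hS).symm
  have hBunit : IsUnit B := isUnit_of_invertible B
  let _ : Invertible D :=
    (hBSB ▸ (hBunit.mul hS.isUnit).mul ((isUnit_transpose B).2 hBunit)).invertible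
  have hLDL : B⁻¹ * D * B⁻¹ᵀ = S := by
    simp [← hBSB, Matrix.mul_assoc, transpose_nonsing_inv]
  have hD : D.IsSymm := diagonal_transpose _
  set A := lowerHalf (-(B * C * Bᵀ))
  have hA : A + Aᵀ = -(B * C * Bᵀ) := lowerHalf_add_transpose <| by
    simp [IsSymm, transpose_mul, hC.eq, Matrix.mul_assoc]
  refine ⟨B⁻¹ * A * D⁻¹ * B⁻¹⁻¹, ?_, ?_⟩
  · have hDtri : D.BlockTriangular OrderDual.toDual := blockTriangular_diagonal _
    exact (((blockTriangular_inv_of_blockTriangular hB).mul (blockTriangular_lowerHalf _)).mul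
      (blockTriangular_inv_of_blockTriangular hDtri)).mul (by simpa using hB)
  · rw [lyapunov_conj_eq A hLDL hD, hA]
    simp [Matrix.mul_assoc, transpose_nonsing_inv]

theorem exists_inSupp_lyapunov_of_complete_dag {n : Type*} [Fintype n] {E : Set (n × n)}
    (hloops : ∀ i, (i, i) ∈ E) (hacyc : ∀ i, ¬ Relation.TransGen (edgeRel E) i i)
    (htot : ∀ i j, i ≠ j → (i, j) ∈ E ∨ (j, i) ∈ E)
    {S : Matrix n n ℝ} (hS : S.PosDef) {C : Matrix n n ℝ} (hC : C.IsSymm) :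
    ∃ M : Matrix n n ℝ, InSupp E M ∧ M * S + S * Mᵀ + C = 0 := by
  classical
  have := isStrictTotalOrder_edgeRel hacyc htot
  let _ : LinearOrder n := linearOrderOfSTO (edgeRel E)
  obtain ⟨M, hMtri, hM⟩ := exists_lowerTriangular_lyapunov hS hC
  refine ⟨M, fun i j hij => hMtri ?_, hM⟩
  have hne : i ≠ j := fun h => hij (h ▸ hloops i)
  exact ⟨(htot i j hne).resolve_left hij, hne.symm⟩

/-- for a complete DAG (with all self-loops, and for every pair of
distinct nodes exactly one of the two possible edges), the model equals the whole
positive definite cone. -/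
theorem complete_dag_model_eq_posdef {p : ℕ}
    (E : Set (Fin p × Fin p)) (hloops : ∀ i : Fin p, (i, i) ∈ E)
    (hacyc : ∀ i : Fin p,
      ¬ Relation.TransGen (fun a b : Fin p => (a, b) ∈ E ∧ a ≠ b) i i)
    (hcomp : ∀ i j : Fin p, i ≠ j → Xor' ((i, j) ∈ E) ((j, i) ∈ E))
    (C : Matrix (Fin p) (Fin p) ℝ) (hC : C.PosDef) :
    LyapModel E C = {S : Matrix (Fin p) (Fin p) ℝ | S.PosDef} := by
  ext S
  refine ⟨And.left, fun hS => ⟨hS, ?_⟩⟩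
  exact exists_inSupp_lyapunov_of_complete_dag hloops hacyc (fun i j h => Xor.or (hcomp i j h)) hS
    (isHermitian_iff_isSymm.mp hC.isHermitian)
end

section
/- Let G=(V,E) be a directed acyclic graph on V=[p] containing all self-loops, and let C be a symmetric positive definite p×p matrix. Then the graphical continuous Lyapunov model M_{G,C} is a closed subset of PD_p in the subspace topology, i.e., it is relatively closed in the set of symmetric positive definite matrices. -/
open Matrix MeasureTheory

/-! If `M ∈ ℝ^E` and `MΣ + ΣMᵀ = 0` with `Σ` positive definite, then `MΣ` is skew-symmetric.
Going through the nodes of the DAG in topological order, the row `m` of `M` at node `i` is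
supported on `i` and its parents, whose rows vanish already; hence `mᵀΣm = ∑ⱼ (MΣ)ᵢⱼ mⱼ = 0`
and `m = 0`. So `M ↦ MΣ + ΣMᵀ` is injective on `ℝ^E` at every positive definite `Σ`.
An injective operator on a finite-dimensional space remains uniformly bounded below on a
neighbourhood, so along a sequence `Σₖ → Σ` in the model the solutions `Mₖ` stay bounded,
and a limit point of them solves the Lyapunov equation at `Σ`. -/

open Filter Topology Function

instance Matrix.firstCountableTopology {m n R : Type*} [Countable m] [Countable n]
    [TopologicalSpace R] [FirstCountableTopology R] : FirstCountableTopology (Matrix m n R) :=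
  inferInstanceAs (FirstCountableTopology (m → n → R))

theorem Finite.wellFounded_of_not_transGen_self {α : Type*} [Finite α] {r : α → α → Prop}
    (h : ∀ a, ¬ Relation.TransGen r a a) : WellFounded r :=
  have : IsTrans α (Relation.TransGen r) := ⟨fun _ _ _ => Relation.TransGen.trans⟩
  have : Std.Irrefl (Relation.TransGen r) := ⟨h⟩
  Subrelation.wf Relation.TransGen.single (Finite.wellFounded_of_trans_of_irrefl _)

namespace ContinuousLinearMap

variable {𝕜 V W : Type*} [NontriviallyNormedField 𝕜] [CompleteSpace 𝕜]
  [NormedAddCommGroup V] [NormedSpace 𝕜 V] [FiniteDimensional 𝕜 V]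
  [NormedAddCommGroup W] [NormedSpace 𝕜 W]

theorem exists_eventually_norm_le_mul_norm_apply {A : V →L[𝕜] W} (hA : Injective A) :
    ∃ K, ∀ᶠ B in 𝓝 A, ∀ v, ‖v‖ ≤ K * ‖B v‖ := by
  obtain ⟨K, hK, hAK⟩ := A.injective_iff_antilipschitz.mp hA
  have hK : (0 : ℝ) < K := hK
  refine ⟨2 * K, ?_⟩
  filter_upwards [eventually_norm_sub_lt A (ε := 1 / (2 * K)) (by positivity)] with B hB v
  have hKB : K * ‖B - A‖ ≤ 1 / 2 := by
    linarith [(lt_div_iff₀ (by positivity)).mp hB]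
  have : ‖v‖ ≤ K * ‖B v‖ + ‖v‖ / 2 :=
    calc ‖v‖ ≤ K * ‖A v‖ := A.bound_of_antilipschitz hAK v
      _ ≤ K * (‖B v‖ + ‖B - A‖ * ‖v‖) := by
          gcongr
          calc ‖A v‖ ≤ ‖B v‖ + ‖(B - A) v‖ := by simpa using norm_sub_le (B v) ((B - A) v)
            _ ≤ ‖B v‖ + ‖B - A‖ * ‖v‖ := by gcongr; exact (B - A).le_opNorm v
      _ ≤ K * ‖B v‖ + ‖v‖ / 2 := by
          rw [mul_add, ← mul_assoc]
          gcongr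
          linarith [mul_le_mul_of_nonneg_right hKB (norm_nonneg v)]
  linarith

end ContinuousLinearMap

theorem isClosed_setOf_mem_range_of_injective {X V W : Type*} [TopologicalSpace X]
    [SequentialSpace X] [NormedAddCommGroup V] [NormedSpace ℝ V] [FiniteDimensional ℝ V]
    [NormedAddCommGroup W] [NormedSpace ℝ W] {T : X → V →L[ℝ] W} (hT : Continuous T)
    (hinj : ∀ x, Injective (T x)) (w : W) : IsClosed {x | w ∈ Set.range (T x)} := by
  refine IsSeqClosed.isClosed fun {x x₀} hx hlim => ?_
  choose v hv using hx
  have hTx : Tendsto (T ∘ x) atTop (𝓝 (T x₀)) := (hT.tendsto x₀).comp hlim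
  obtain ⟨K, hK⟩ := ContinuousLinearMap.exists_eventually_norm_le_mul_norm_apply (hinj x₀)
  have hbdd : ∀ᶠ n in atTop, v n ∈ Metric.closedBall 0 (K * ‖w‖) :=
    (hTx.eventually hK).mono fun n hn => by simpa [hv n] using hn (v n)
  obtain ⟨v₀, -, φ, hφ, hvφ⟩ :=
    tendsto_subseq_of_frequently_bounded Metric.isBounded_closedBall hbdd.frequently
  have happ : Tendsto (fun k => T (x (φ k)) (v (φ k))) atTop (𝓝 (T x₀ v₀)) :=
    ((continuous_fst.clm_apply continuous_snd).tendsto (T x₀, v₀)).comp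
      ((hTx.comp hφ.tendsto_atTop).prodMk_nhds hvφ)
  simp only [hv] at happ
  exact ⟨v₀, tendsto_nhds_unique happ tendsto_const_nhds⟩

section Lyapunov

variable {n : Type*}

def supportSubmodule (E : Set (n × n)) : Submodule ℝ (Matrix n n ℝ) where
  carrier := {M | InSupp E M}
  add_mem' ha hb i j h := by simp [ha i j h, hb i j h]
  zero_mem' _ _ _ := rfl
  smul_mem' c _ hM i j h := by simp [hM i j h]

@[simp]
theorem mem_supportSubmodule {E : Set (n × n)} {M : Matrix n n ℝ} :
    M ∈ supportSubmodule E ↔ InSupp E M :=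
  Iff.rfl

variable [Fintype n]

theorem eq_zero_of_mul_add_mul_transpose_eq_zero {E : Set (n × n)}
    (hwf : WellFounded fun a b : n => (a, b) ∈ E ∧ a ≠ b) {S M : Matrix n n ℝ} (hS : S.PosDef)
    (hM : InSupp E M) (h : M * S + S * Mᵀ = 0) : M = 0 := by
  have hskew (i j : n) : (M * S) j i = -(M * S) i j := by
    have hST : Sᵀ = S := (isHermitian_iff_isSymm.mp hS.isHermitian).eq
    have : (M * S)ᵀ = -(M * S) := by
      rw [transpose_mul, hST]; exact eq_neg_of_add_eq_zero_right h
    simpa using congrFun (congrFun this i) j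
  suffices ∀ i, M i = 0 from funext this
  intro i
  induction i using hwf.induction with
  | _ i ih =>
  by_contra hne
  refine (hS.dotProduct_mulVec_pos hne).ne' ?_
  rw [star_trivial, dotProduct_mulVec, ← mul_apply_eq_vecMul]
  refine Finset.sum_eq_zero fun j _ => ?_
  by_cases hj : (j, i) ∈ E
  · obtain rfl | hji := eq_or_ne j i
    · simp [CharZero.eq_neg_self_iff.mp (hskew j j)]
    · have hji_zero : (M * S) j i = 0 := by rw [mul_apply_eq_vecMul, ih j ⟨hj, hji⟩]; simp
      have hij_zero : (M * S) i j = 0 := by rw [← neg_eq_zero, ← hskew, hji_zero]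
      simp [hij_zero]
  · simp [hM j i hj]

attribute [local instance] Matrix.normedAddCommGroup Matrix.normedSpace

noncomputable def lyapunovOperator (E : Set (n × n)) :
    Matrix n n ℝ →ₗ[ℝ] supportSubmodule E →L[ℝ] Matrix n n ℝ :=
  LinearMap.toContinuousLinearMap.toLinearMap ∘ₗ LinearMap.mk₂ ℝ
    (fun S (M : supportSubmodule E) => (M : Matrix n n ℝ) * S + S * (M : Matrix n n ℝ)ᵀ)
    (fun S S' M => by simp only [mul_add, add_mul]; abel)
    (fun c S M => by simp only [Matrix.mul_smul, smul_mul, smul_add])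
    (fun S M M' => by simp only [Submodule.coe_add, transpose_add, mul_add, add_mul]; abel)
    (fun c S M => by
      simp only [SetLike.val_smul, transpose_smul, Matrix.mul_smul, smul_mul, smul_add])

theorem lyapunovOperator_apply (E : Set (n × n)) (S : Matrix n n ℝ) (M : supportSubmodule E) :
    lyapunovOperator E S M = (M : Matrix n n ℝ) * S + S * (M : Matrix n n ℝ)ᵀ := rfl

theorem continuous_lyapunovOperator (E : Set (n × n)) : Continuous (lyapunovOperator E) :=
  LinearMap.continuous_of_finiteDimensional (F' := supportSubmodule E →L[ℝ] Matrix n n ℝ) _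

theorem lyapunovOperator_injective {E : Set (n × n)}
    (hwf : WellFounded fun a b : n => (a, b) ∈ E ∧ a ≠ b) {S : Matrix n n ℝ} (hS : S.PosDef) :
    Injective (lyapunovOperator E S) :=
  (injective_iff_map_eq_zero _).mpr fun M hM =>
    Subtype.ext (eq_zero_of_mul_add_mul_transpose_eq_zero hwf hS M.2 hM)

theorem isClosed_setOf_mem_lyapModel [DecidableEq n] {E : Set (n × n)}
    (hwf : WellFounded fun a b : n => (a, b) ∈ E ∧ a ≠ b) (C : Matrix n n ℝ) :
    IsClosed {S : {A : Matrix n n ℝ // A.PosDef} | (S : Matrix n n ℝ) ∈ LyapModel E C} := by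
  have hmodel : {S : {A : Matrix n n ℝ // A.PosDef} | (S : Matrix n n ℝ) ∈ LyapModel E C} =
      {S : {A : Matrix n n ℝ // A.PosDef} | -C ∈ Set.range (lyapunovOperator E S)} := by
    ext S
    simp only [LyapModel, Set.mem_ofPred_eq, S.2, true_and, Set.mem_range, Subtype.exists,
      lyapunovOperator_apply, add_eq_zero_iff_eq_neg, mem_supportSubmodule, exists_prop]
  rw [hmodel]
  exact isClosed_setOf_mem_range_of_injective
    ((continuous_lyapunovOperator E).comp continuous_subtype_val)
    (fun S => lyapunovOperator_injective hwf S.2) (-C)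

end Lyapunov

theorem dag_model_closed_in_posdef_general {p : ℕ}
    (E : Set (Fin p × Fin p))
    (hacyc : ∀ i : Fin p,
      ¬ Relation.TransGen (fun a b : Fin p => (a, b) ∈ E ∧ a ≠ b) i i)
    (C : Matrix (Fin p) (Fin p) ℝ) :
    IsClosed {S : {A : Matrix (Fin p) (Fin p) ℝ // A.PosDef} |
      (S : Matrix (Fin p) (Fin p) ℝ) ∈ LyapModel E C} :=
  isClosed_setOf_mem_lyapModel (Finite.wellFounded_of_not_transGen_self hacyc) C

/-- for a DAG (with all self-loops) and symmetric positive definite `C`,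
the model `M_{G,C}` is relatively closed in the set of positive definite matrices. -/
theorem dag_model_closed_in_posdef {p : ℕ}
    (E : Set (Fin p × Fin p)) (hloops : ∀ i : Fin p, (i, i) ∈ E)
    (hacyc : ∀ i : Fin p,
      ¬ Relation.TransGen (fun a b : Fin p => (a, b) ∈ E ∧ a ≠ b) i i)
    (C : Matrix (Fin p) (Fin p) ℝ) (hC : C.PosDef) :
    IsClosed {S : {A : Matrix (Fin p) (Fin p) ℝ // A.PosDef} |
      (S : Matrix (Fin p) (Fin p) ℝ) ∈ LyapModel E C} :=
  dag_model_closed_in_posdef_general E hacyc C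
end

section
/- Let G=(V,E) be a simple directed graph on V=[p] containing all self-loops, and let C be a symmetric positive definite p×p matrix. Then the graphical continuous Lyapunov model M_{G,C} is a closed subset of PD_p in the subspace topology, i.e., it is relatively closed in the set of symmetric positive definite matrices. -/
/-!
For positive definite `S`, the Lyapunov operator `M ↦ M * S + S * Mᵀ` is injective on `ℝ^E`
when `E` is simple: writing `S = W * W`, a kernel element `M` is similar to the skew-symmetric
matrix `W⁻¹ * M * W`, so `tr (M * M) < 0` unless `M = 0`, whereas
`tr (M * M) = ∑ i j, M i j * M j i ≥ 0` because no edge is reversed. Hence `S` lies in the model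
iff `-C` lies in the range of an injective linear map on the fixed finite-dimensional space
`ℝ^E` depending continuously on `S`. On a basis of `ℝ^E`, this says that the images together
with `-C` are linearly dependent, which is a closed condition.
-/

open Matrix MeasureTheory

theorem isClosed_setOf_mem_span_of_linearIndependent {𝕜 X ι W : Type*}
    [NontriviallyNormedField 𝕜] [CompleteSpace 𝕜] [TopologicalSpace X] [Finite ι]
    [NormedAddCommGroup W] [NormedSpace 𝕜 W] {v : X → ι → W} (hv : Continuous v)
    (hind : ∀ x, LinearIndependent 𝕜 (v x)) (c : W) :
    IsClosed {x | c ∈ Submodule.span 𝕜 (Set.range (v x))} := by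
  have hcont : Continuous fun x (o : Option ι) => Option.casesOn' o c (v x) := by
    refine continuous_pi fun o => ?_
    cases o with
    | none => exact continuous_const
    | some k => exact (continuous_apply k).comp hv
  convert ((isOpen_setOfPred_linearIndependent (𝕜 := 𝕜)).preimage hcont).isClosed_compl
    using 1
  ext x
  simp [linearIndependent_option', hind x]

theorem isClosed_setOf_mem_range_of_injective_s7 {𝕜 X V W : Type*}
    [NontriviallyNormedField 𝕜] [CompleteSpace 𝕜] [TopologicalSpace X]
    [AddCommGroup V] [Module 𝕜 V] [FiniteDimensional 𝕜 V]
    [NormedAddCommGroup W] [NormedSpace 𝕜 W] {L : X → V →ₗ[𝕜] W}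
    (hcont : ∀ v, Continuous fun x => L x v) (hinj : ∀ x, Function.Injective (L x)) (c : W) :
    IsClosed {x | c ∈ LinearMap.range (L x)} := by
  let b := Module.finBasis 𝕜 V
  have hspan (x : X) : Submodule.span 𝕜 (Set.range (L x ∘ b)) = LinearMap.range (L x) := by
    rw [Set.range_comp, ← Submodule.map_span, b.span_eq, LinearMap.range_eq_map]
  simp only [← hspan]
  exact isClosed_setOf_mem_span_of_linearIndependent (continuous_pi fun k => hcont (b k))
    (fun x => b.linearIndependent.map' _ (LinearMap.ker_eq_bot.2 (hinj x))) c

section Lyapunov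

variable {n : Type*}

def suppSubmodule (E : Set (n × n)) : Submodule ℝ (Matrix n n ℝ) where
  carrier := {M | InSupp E M}
  add_mem' hM hN i j hij := by simp [hM i j hij, hN i j hij]
  zero_mem' _ _ _ := rfl
  smul_mem' c M hM i j hij := by simp [hM i j hij]

@[simp]
theorem mem_suppSubmodule {E : Set (n × n)} {M : Matrix n n ℝ} :
    M ∈ suppSubmodule E ↔ InSupp E M := Iff.rfl

variable [Fintype n]

def lyapunovMap {R : Type*} [CommRing R] (S : Matrix n n R) :
    Matrix n n R →ₗ[R] Matrix n n R where
  toFun M := M * S + S * Mᵀ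
  map_add' M N := by
    simp only [Matrix.add_mul, transpose_add, Matrix.mul_add]
    abel
  map_smul' c M := by
    simp only [Matrix.smul_mul, transpose_smul, Matrix.mul_smul, smul_add, RingHom.id_apply]

@[simp]
theorem lyapunovMap_apply {R : Type*} [CommRing R] (S M : Matrix n n R) :
    lyapunovMap S M = M * S + S * Mᵀ := rfl

theorem InSupp.trace_mul_self_nonneg {E : Set (n × n)} (hsimple : IsSimpleDigraph E)
    {M : Matrix n n ℝ} (hM : InSupp E M) : 0 ≤ (M * M).trace := by
  have hterm : ∀ i j, 0 ≤ M i j * M j i := by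
    intro i j
    rcases eq_or_ne i j with rfl | hij
    · exact mul_self_nonneg _
    by_cases hji : (j, i) ∈ E
    · rw [hM i j (hsimple j i hij.symm hji), mul_zero]
    · rw [hM j i hji, zero_mul]
  simp only [trace, diag, mul_apply]
  exact Finset.sum_nonneg fun i _ => Finset.sum_nonneg fun j _ => hterm i j

variable [DecidableEq n]

open scoped MatrixOrder in
theorem Matrix.PosDef.exists_transpose_eq_isUnit_mul_self_eq {S : Matrix n n ℝ} (hS : S.PosDef) :
    ∃ W : Matrix n n ℝ, Wᵀ = W ∧ IsUnit W ∧ W * W = S := by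
  refine ⟨CFC.sqrt S, ?_, CFC.isUnit_sqrt_iff_isStrictlyPositive.2 hS.isStrictlyPositive,
    CFC.sqrt_mul_sqrt_self S hS.posSemidef.nonneg⟩
  simpa [conjTranspose_eq_transpose_of_trivial] using
    (CFC.sqrt_nonneg S).posSemidef.isHermitian.eq

theorem Matrix.PosDef.trace_mul_self_neg_of_lyapunov_eq_zero {S M : Matrix n n ℝ}
    (hS : S.PosDef) (h : M * S + S * Mᵀ = 0) (hM : M ≠ 0) : (M * M).trace < 0 := by
  obtain ⟨W, hWt, hW, rfl⟩ := hS.exists_transpose_eq_isUnit_mul_self_eq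
  have hdet : IsUnit W.det := (isUnit_iff_isUnit_det W).1 hW
  set N := W⁻¹ * M * W
  have hM_eq : M = W * N * W⁻¹ := by
    simp only [N, Matrix.mul_assoc, mul_nonsing_inv_cancel_left _ _ hdet, mul_nonsing_inv _ hdet,
      Matrix.mul_one]
  have hN : Nᵀ = -N := by
    have hsum : N + Nᵀ = W⁻¹ * (M * (W * W) + W * W * Mᵀ) * W⁻¹ := by
      simp only [N, transpose_mul, transpose_nonsing_inv, hWt, Matrix.mul_add, Matrix.add_mul,
        Matrix.mul_assoc, mul_nonsing_inv _ hdet, nonsing_inv_mul_cancel_left _ _ hdet,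
        Matrix.mul_one]
    rw [h, Matrix.mul_zero, Matrix.zero_mul] at hsum
    exact eq_neg_of_add_eq_zero_right hsum
  have htrace : (M * M).trace = -(Nᵀ * N).trace := by
    rw [hN, neg_mul, trace_neg, neg_neg, hM_eq, ← trace_conj hW (N * N)]
    simp only [Matrix.mul_assoc, nonsing_inv_mul_cancel_left _ _ hdet]
  have hN0 : N ≠ 0 := by
    rintro hN0
    exact hM (by rw [hM_eq, hN0, Matrix.mul_zero, Matrix.zero_mul])
  have hpos : 0 < (Nᵀ * N).trace := by
    rw [← conjTranspose_eq_transpose_of_trivial]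
    exact (posSemidef_conjTranspose_mul_self N).trace_nonneg.lt_of_ne'
      (trace_conjTranspose_mul_self_eq_zero_iff.not.2 hN0)
  linarith

theorem eq_zero_of_lyapunov_eq_zero {E : Set (n × n)} (hsimple : IsSimpleDigraph E)
    {S M : Matrix n n ℝ} (hS : S.PosDef) (hM : InSupp E M) (h : M * S + S * Mᵀ = 0) :
    M = 0 := by
  by_contra hne
  exact (hM.trace_mul_self_nonneg hsimple).not_gt
    (hS.trace_mul_self_neg_of_lyapunov_eq_zero h hne)

theorem injective_lyapunovMap_domRestrict {E : Set (n × n)}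
    (hsimple : IsSimpleDigraph E) {S : Matrix n n ℝ} (hS : S.PosDef) :
    Function.Injective ((lyapunovMap S).domRestrict (suppSubmodule E)) := by
  rw [← LinearMap.ker_eq_bot, LinearMap.ker_eq_bot']
  rintro ⟨M, hM⟩ h
  exact Subtype.ext (eq_zero_of_lyapunov_eq_zero hsimple hS hM h)

theorem mem_lyapModel_iff_neg_mem_range {E : Set (n × n)}
    (C : Matrix n n ℝ) {S : Matrix n n ℝ} (hS : S.PosDef) :
    S ∈ LyapModel E C ↔
      -C ∈ LinearMap.range ((lyapunovMap S).domRestrict (suppSubmodule E)) := by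
  simp only [LyapModel, LinearMap.mem_range, Subtype.exists, LinearMap.domRestrict_apply,
    lyapunovMap_apply, mem_suppSubmodule, exists_prop, eq_neg_iff_add_eq_zero]
  exact ⟨fun h => h.2, fun h => ⟨hS, h⟩⟩

end Lyapunov

-- Matrices carry no global norm; the entrywise sup norm induces their product topology.
attribute [local instance] Matrix.normedAddCommGroup Matrix.normedSpace in
theorem simple_model_closed_in_posdef_general {p : ℕ}
    (E : Set (Fin p × Fin p))
    (hsimple : IsSimpleDigraph E)
    (C : Matrix (Fin p) (Fin p) ℝ) :
    IsClosed {S : {A : Matrix (Fin p) (Fin p) ℝ // A.PosDef} |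
      (S : Matrix (Fin p) (Fin p) ℝ) ∈ LyapModel E C} := by
  have hcont (M : suppSubmodule E) :
      Continuous fun S : {A : Matrix (Fin p) (Fin p) ℝ // A.PosDef} => lyapunovMap S.1 M := by
    simp only [lyapunovMap_apply]
    fun_prop
  convert isClosed_setOf_mem_range_of_injective_s7 hcont
    (fun S => injective_lyapunovMap_domRestrict hsimple S.2) (-C) using 1
  ext S
  exact mem_lyapModel_iff_neg_mem_range C S.2

/-- for a simple graph (with all self-loops) and symmetric positive
definite `C`, the model `M_{G,C}` is relatively closed in the positive definite
matrices. -/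
theorem simple_model_closed_in_posdef {p : ℕ}
    (E : Set (Fin p × Fin p)) (hloops : ∀ i : Fin p, (i, i) ∈ E)
    (hsimple : IsSimpleDigraph E)
    (C : Matrix (Fin p) (Fin p) ℝ) (hC : C.PosDef) :
    IsClosed {S : {A : Matrix (Fin p) (Fin p) ℝ // A.PosDef} |
      (S : Matrix (Fin p) (Fin p) ℝ) ∈ LyapModel E C} :=
  simple_model_closed_in_posdef_general E hsimple C
end

section
/- Let Σ and C be symmetric positive definite p×p real matrices. A real p×p matrix M satisfies the continuous Lyapunov equation MΣ + ΣM^⊤ + C = 0 if and only if there exists a skew-symmetric real p×p matrix K such that M = (K − (1/2)C)Σ^{-1}. -/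
open Matrix MeasureTheory

theorem half_smul_add_half_smul {𝕜 V : Type*} [Field 𝕜] [NeZero (2 : 𝕜)] [AddCommMonoid V]
    [Module 𝕜 V] (v : V) : (1 / 2 : 𝕜) • v + (1 / 2 : 𝕜) • v = v := by
  rw [← add_smul, add_halves, one_smul]

theorem Matrix.add_transpose_add_eq_zero_iff_exists_skew {𝕜 n : Type*} [Field 𝕜]
    [NeZero (2 : 𝕜)] {C : Matrix n n 𝕜} (hC : C.IsSymm) (X : Matrix n n 𝕜) :
    X + Xᵀ + C = 0 ↔ ∃ K : Matrix n n 𝕜, Kᵀ = -K ∧ X = K - (1 / 2 : 𝕜) • C := by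
  constructor
  · intro h
    refine ⟨X + (1 / 2 : 𝕜) • C, ?_, (add_sub_cancel_right _ _).symm⟩
    rw [transpose_add, transpose_smul, hC.eq, eq_neg_iff_add_eq_zero, ← h,
      add_add_add_comm, half_smul_add_half_smul, add_comm Xᵀ]
  · rintro ⟨K, hK, rfl⟩
    rw [transpose_sub, transpose_smul, hC.eq, hK]
    calc K - (1 / 2 : 𝕜) • C + (-K - (1 / 2 : 𝕜) • C) + C
        = C - ((1 / 2 : 𝕜) • C + (1 / 2 : 𝕜) • C) := by abel
      _ = 0 := by rw [half_smul_add_half_smul, sub_self]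

/-- `M` solves the Lyapunov equation `M Σ + Σ Mᵀ + C = 0` if and only if
`M = (K - (1/2) C) Σ⁻¹` for some skew-symmetric `K`. -/
theorem lyapunov_solution_iff_skew {p : ℕ}
    (S C M : Matrix (Fin p) (Fin p) ℝ) (hS : S.PosDef) (hC : C.PosDef) :
    M * S + S * Mᵀ + C = 0 ↔
      ∃ K : Matrix (Fin p) (Fin p) ℝ, Kᵀ = -K ∧ M = (K - (1 / 2 : ℝ) • C) * S⁻¹ := by
  have hSsymm : S.IsSymm := isHermitian_iff_isSymm.mp hS.isHermitian
  have := hS.isUnit.invertible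
  have hMS : S * Mᵀ = (M * S)ᵀ := by rw [transpose_mul, hSsymm.eq]
  rw [hMS, add_transpose_add_eq_zero_iff_exists_skew (isHermitian_iff_isSymm.mp hC.isHermitian)]
  simp_rw [eq_comm (a := M), mul_inv_eq_iff_eq_mul_of_invertible, eq_comm (b := M * S)]
end

section
/- Let G=(V,E) be a directed graph on V=[p] containing all self-loops, and let C be a symmetric positive definite p×p matrix. Then the graphical continuous Lyapunov model M_{G,C} is globally identifiable if and only if for every Σ ∈ M_{G,C} the linear map from ℝ^E to the symmetric p×p matrices given by M ↦ MΣ + ΣM^⊤ is injective. -/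
/-! If `S` solves `M₀ S + S M₀ᵀ + C = 0` for some `M₀ ∈ ℝ^E`, the solutions `M ∈ ℝ^E` of the same
equation form the coset of `M₀` by the kernel of `M ↦ M S + S Mᵀ` on `ℝ^E`. Every such solution is
stable: for a left eigenvector `w` of `M` with eigenvalue `μ`, the equation gives
`2 Re μ · (w S w*) = -(w C w*)`, and both quadratic forms are positive. Hence the fibers are
singletons exactly when that kernel is trivial. -/

open Matrix MeasureTheory

open scoped ComplexOrder

namespace Matrix

variable {n : Type*} [Fintype n]

lemma re_star_dotProduct_map_mulVec (S : Matrix n n ℝ) (w : n → ℂ) :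
    (star w ⬝ᵥ S.map (algebraMap ℝ ℂ) *ᵥ w).re =
      (fun i => (w i).re) ⬝ᵥ S *ᵥ (fun i => (w i).re) +
        (fun i => (w i).im) ⬝ᵥ S *ᵥ (fun i => (w i).im) := by
  simp only [dotProduct, mulVec, map_apply, Pi.star_apply, Complex.re_sum, Finset.mul_sum,
    ← Finset.sum_add_distrib, Complex.mul_re, Complex.coe_algebraMap, Complex.im_ofReal_mul,
    Complex.ofReal_re, Complex.ofReal_im, Complex.star_def, Complex.conj_re, Complex.conj_im]
  refine Finset.sum_congr rfl fun i _ => Finset.sum_congr rfl fun j _ => ?_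
  ring

theorem PosDef.map_complex {S : Matrix n n ℝ} (hS : S.PosDef) :
    (S.map (algebraMap ℝ ℂ)).PosDef := by
  have hSc : (S.map (algebraMap ℝ ℂ)).IsHermitian :=
    hS.isHermitian.map _ algebraMap_star_comm
  refine posDef_iff_dotProduct_mulVec.2 ⟨hSc, fun w hw => Complex.pos_iff.2
    ⟨?_, (hSc.im_star_dotProduct_mulVec_self w).symm⟩⟩
  rw [re_star_dotProduct_map_mulVec]
  have hre := hS.posSemidef.dotProduct_mulVec_nonneg fun i => (w i).re
  have him := hS.posSemidef.dotProduct_mulVec_nonneg fun i => (w i).im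
  have hparts : (fun i => (w i).re) ≠ 0 ∨ (fun i => (w i).im) ≠ 0 := by
    by_contra! h
    exact hw (funext fun i => Complex.ext (congrFun h.1 i) (congrFun h.2 i))
  simp only [star_trivial] at hre him
  rcases hparts with h | h
  · exact add_pos_of_pos_of_nonneg (by simpa using hS.dotProduct_mulVec_pos h) him
  · exact add_pos_of_nonneg_of_pos hre (by simpa using hS.dotProduct_mulVec_pos h)

theorem exists_vecMul_eq_smul_of_mem_spectrum [DecidableEq n] {K : Type*} [Field K]
    {A : Matrix n n K} {μ : K} (hμ : μ ∈ spectrum K A) : ∃ w ≠ 0, w ᵥ* A = μ • w := by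
  rw [spectrum.mem_iff, isUnit_iff_isUnit_det, isUnit_iff_ne_zero, not_not,
    ← exists_vecMul_eq_zero_iff] at hμ
  obtain ⟨w, hw, hwA⟩ := hμ
  refine ⟨w, hw, ?_⟩
  rwa [vecMul_sub, Algebra.algebraMap_eq_smul_one, vecMul_smul, vecMul_one, sub_eq_zero,
    eq_comm] at hwA

theorem re_lt_zero_of_mem_spectrum_of_lyapunov [DecidableEq n] {A P Q : Matrix n n ℂ}
    (hP : P.PosDef) (hQ : Q.PosDef) (h : A * P + P * Aᴴ + Q = 0) {μ : ℂ}
    (hμ : μ ∈ spectrum ℂ A) : μ.re < 0 := by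
  obtain ⟨w, hw, hwA⟩ := exists_vecMul_eq_smul_of_mem_spectrum hμ
  have hw' : star w ≠ 0 := star_ne_zero.2 hw
  have hAx : Aᴴ *ᵥ star w = star μ • star w := by rw [← star_vecMul, hwA, star_smul]
  have key : (μ + star μ) * (w ⬝ᵥ P *ᵥ star w) = -(w ⬝ᵥ Q *ᵥ star w) := by
    rw [← dotProduct_neg, ← neg_mulVec, ← eq_neg_of_add_eq_zero_left h, add_mulVec,
      dotProduct_add, ← mulVec_mulVec, ← mulVec_mulVec, hAx, dotProduct_mulVec w A, hwA,
      mulVec_smul, smul_dotProduct, dotProduct_smul, smul_eq_mul, smul_eq_mul, add_mul]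
  have hre := congrArg Complex.re key
  rw [Complex.star_def, Complex.add_conj, Complex.re_ofReal_mul, Complex.neg_re] at hre
  have hPx := hP.re_dotProduct_pos hw'
  have hQx := hQ.re_dotProduct_pos hw'
  simp only [star_star, RCLike.re_to_complex] at hPx hQx
  nlinarith

end Matrix

theorem isStableMat_of_lyapunov {n : Type*} [Fintype n] [DecidableEq n]
    {M S C : Matrix n n ℝ} (hS : S.PosDef) (hC : C.PosDef) (h : M * S + S * Mᵀ + C = 0) :
    IsStableMat M := by
  intro μ hμ
  have hc := congrArg (algebraMap ℝ ℂ).mapMatrix h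
  simp only [map_add, map_mul, map_zero, RingHom.mapMatrix_apply] at hc
  refine re_lt_zero_of_mem_spectrum_of_lyapunov hS.map_complex hC.map_complex ?_ hμ
  rwa [← conjTranspose_map _ algebraMap_star_comm, conjTranspose_eq_transpose_of_trivial]

theorem InSupp.add_s10 {n : Type*} {E : Set (n × n)} {A B : Matrix n n ℝ} (hA : InSupp E A)
    (hB : InSupp E B) : InSupp E (A + B) := fun i j hij => by
  simp [hA i j hij, hB i j hij]

theorem InSupp.sub_s10 {n : Type*} {E : Set (n × n)} {A B : Matrix n n ℝ} (hA : InSupp E A)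
    (hB : InSupp E B) : InSupp E (A - B) := fun i j hij => by
  simp [hA i j hij, hB i j hij]

theorem globally_identifiable_iff_injective_general {p : ℕ}
    (E : Set (Fin p × Fin p))
    (C : Matrix (Fin p) (Fin p) ℝ) (hC : C.PosDef) :
    GloballyIdentifiable E C ↔
      ∀ S ∈ LyapModel E C, ∀ M₁ M₂ : Matrix (Fin p) (Fin p) ℝ,
        InSupp E M₁ → InSupp E M₂ →
        M₁ * S + S * M₁ᵀ = M₂ * S + S * M₂ᵀ → M₁ = M₂ := by
  refine ⟨fun hGI S ⟨hS, M₀, hM₀, hM₀S⟩ M₁ M₂ hM₁ hM₂ heq => ?_,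
    fun hinj M₁ M₂ hM₁ _ hM₂ _ S hS h₁ h₂ => ?_⟩
  · set M := M₀ + (M₁ - M₂)
    have hMS : M * S + S * Mᵀ + C = 0 :=
      calc M * S + S * Mᵀ + C
          = (M₀ * S + S * M₀ᵀ + C) + (M₁ * S + S * M₁ᵀ) - (M₂ * S + S * M₂ᵀ) := by
            simp only [M, transpose_add, transpose_sub, add_mul, sub_mul, mul_add, mul_sub]
            abel
        _ = 0 := by rw [hM₀S, heq, zero_add, sub_self]
    have hM₀M : M₀ = M := hGI M₀ M hM₀ (isStableMat_of_lyapunov hS hC hM₀S)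
      (hM₀.add_s10 (hM₁.sub_s10 hM₂)) (isStableMat_of_lyapunov hS hC hMS) S hS hM₀S hMS
    simpa [M, sub_eq_zero] using hM₀M
  · refine hinj S ⟨hS, M₁, hM₁, h₁⟩ M₁ M₂ hM₁ hM₂ ?_
    rw [eq_neg_of_add_eq_zero_left h₁, eq_neg_of_add_eq_zero_left h₂]

/-- the model is globally identifiable iff for every `Σ` in the model,
the linear map `M ↦ M Σ + Σ Mᵀ` is injective on `ℝ^E`. -/
theorem globally_identifiable_iff_injective {p : ℕ}
    (E : Set (Fin p × Fin p)) (hloops : ∀ i : Fin p, (i, i) ∈ E)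
    (C : Matrix (Fin p) (Fin p) ℝ) (hC : C.PosDef) :
    GloballyIdentifiable E C ↔
      ∀ S ∈ LyapModel E C, ∀ M₁ M₂ : Matrix (Fin p) (Fin p) ℝ,
        InSupp E M₁ → InSupp E M₂ →
        M₁ * S + S * M₁ᵀ = M₂ * S + S * M₂ᵀ → M₁ = M₂ :=
  globally_identifiable_iff_injective_general E C hC
end

section
/- Let G=(V,E) be a directed graph on V=[p] containing all self-loops, and let H=(V',E') be a subgraph with V' ⊆ V and E' ⊆ E ∩ (V'×V') containing all self-loops of V'. If the graphical continuous Lyapunov model M_{G,C} is globally identifiable for some diagonal positive definite p×p matrix C, then M_{H,C'} is globally identifiable for every diagonal positive definite p'×p' matrix C', where p' = |V'|. -/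
/-!
Split the vertices as `V' ⊕ V'ᶜ`; since `C` is diagonal it is block diagonal for this
splitting. A stable `M ∈ ℝ^{E'}` with `M S + S Mᵀ + C_{V'V'} = 0` extends to the stable
block-diagonal `M ⊕ (-½ I) ∈ ℝ^E` (the padding sits on self-loops), which solves the Lyapunov
equation for `C` with the positive definite `S ⊕ C_{V'ᶜV'ᶜ}`; so two such `M` with the same `S`
would contradict identifiability of `G`. Finally `C_{V'V'} = D C' D` for a positive diagonal `D`,
and `M ↦ D M D⁻¹` preserves support, stability and the Lyapunov equation, moving the
identifiability from `C_{V'V'}` to `C'`.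
-/

open Matrix MeasureTheory

theorem Matrix.PosDef.fromBlocks_zero {m n : Type*} [Fintype m] [Fintype n]
    {A : Matrix m m ℝ} {D : Matrix n n ℝ} (hA : A.PosDef) (hD : D.PosDef) :
    (fromBlocks A 0 0 D).PosDef := by
  refine .of_dotProduct_mulVec_pos (hA.1.fromBlocks (by simp) hD.1) fun x hx => ?_
  rw [← Sum.elim_comp_inl_inr x] at hx ⊢
  simp only [star_trivial, fromBlocks_mulVec, zero_mulVec, add_zero, zero_add,
    sumElim_dotProduct_sumElim]
  have hA' := hA.posSemidef.dotProduct_mulVec_nonneg (x ∘ Sum.inl)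
  have hD' := hD.posSemidef.dotProduct_mulVec_nonneg (x ∘ Sum.inr)
  simp only [star_trivial] at hA' hD'
  by_cases hl : x ∘ Sum.inl = 0
  · have hr : x ∘ Sum.inr ≠ 0 := fun hr => hx (by simp [hl, hr])
    simpa using add_lt_add_of_le_of_lt hA' (hD.dotProduct_mulVec_pos hr)
  · simpa using add_lt_add_of_lt_of_le (hA.dotProduct_mulVec_pos hl) hD'

theorem InSupp.mono {n : Type*} {E E' : Set (n × n)} {M : Matrix n n ℝ} (hM : InSupp E' M)
    (hE : E' ⊆ E) : InSupp E M :=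
  fun i j hij => hM i j fun h => hij (hE h)

section

variable {m n : Type*} [Fintype m] [DecidableEq m] [Fintype n] [DecidableEq n]

theorem isStableMat_iff_charpoly {M : Matrix n n ℝ} :
    IsStableMat M ↔ ∀ μ : ℂ, (M.charpoly.map (algebraMap ℝ ℂ)).IsRoot μ → μ.re < 0 := by
  simp only [IsStableMat, mem_spectrum_iff_isRoot_charpoly, charpoly_map]

theorem IsStableMat.of_charpoly_eq {M : Matrix m m ℝ} {N : Matrix n n ℝ}
    (hM : IsStableMat M) (h : N.charpoly = M.charpoly) : IsStableMat N := by
  rw [isStableMat_iff_charpoly, h]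
  exact isStableMat_iff_charpoly.mp hM

theorem isStableMat_fromBlocks_zero₂₁ {A : Matrix m m ℝ} (B : Matrix m n ℝ) {D : Matrix n n ℝ}
    (hA : IsStableMat A) (hD : IsStableMat D) : IsStableMat (fromBlocks A B 0 D) := by
  rw [isStableMat_iff_charpoly] at *
  intro μ hμ
  rw [charpoly_fromBlocks_zero₂₁, Polynomial.map_mul, Polynomial.root_mul] at hμ
  exact hμ.elim (hA μ) (hD μ)

theorem isStableMat_diagonal {d : n → ℝ} (hd : ∀ i, d i < 0) : IsStableMat (diagonal d) := by
  rw [isStableMat_iff_charpoly, charpoly_diagonal]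
  intro μ hμ
  simp only [Polynomial.map_prod, Polynomial.IsRoot, Polynomial.eval_prod,
    Finset.prod_eq_zero_iff] at hμ
  obtain ⟨i, -, hi⟩ := hμ
  simp only [Polynomial.map_sub, Polynomial.map_X, Polynomial.map_C, Polynomial.eval_sub,
    Polynomial.eval_X, Polynomial.eval_C, sub_eq_zero] at hi
  simpa [hi] using hd i

theorem lyapunov_reindex (e : m ≃ n) (M S C : Matrix m m ℝ) :
    reindex e e M * reindex e e S + reindex e e S * (reindex e e M)ᵀ + reindex e e C
      = reindex e e (M * S + S * Mᵀ + C) := by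
  simp only [← coe_reindexAlgEquiv ℝ ℝ, map_add, map_mul]
  simp [coe_reindexAlgEquiv]

theorem GloballyIdentifiable.mono {E E' : Set (n × n)} {C : Matrix n n ℝ}
    (h : GloballyIdentifiable E C) (hE : E' ⊆ E) : GloballyIdentifiable E' C :=
  fun M₁ M₂ h₁ s₁ h₂ s₂ => h M₁ M₂ (h₁.mono hE) s₁ (h₂.mono hE) s₂

theorem GloballyIdentifiable.reindex (e : n ≃ m) {E : Set (n × n)} {C : Matrix n n ℝ}
    (h : GloballyIdentifiable E C) :
    GloballyIdentifiable (Prod.map e.symm e.symm ⁻¹' E) (Matrix.reindex e e C) := by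
  intro M₁ M₂ h₁ s₁ h₂ s₂ S hS L₁ L₂
  have supp : ∀ {M}, InSupp (Prod.map e.symm e.symm ⁻¹' E) M →
      InSupp E (Matrix.reindex e.symm e.symm M) :=
    fun hM i j hij => hM (e i) (e j) (by simpa using hij)
  have lyap : ∀ {M}, M * S + S * Mᵀ + Matrix.reindex e e C = 0 →
      Matrix.reindex e.symm e.symm M * Matrix.reindex e.symm e.symm S
        + Matrix.reindex e.symm e.symm S * (Matrix.reindex e.symm e.symm M)ᵀ + C = 0 :=
    fun {M} hL => by
      have hC : Matrix.reindex e.symm e.symm (Matrix.reindex e e C) = C := by simp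
      rw [← hC, lyapunov_reindex, hL]
      simp
  exact (Matrix.reindex e.symm e.symm).injective <| h _ _ (supp h₁)
    (s₁.of_charpoly_eq (charpoly_reindex _ _)) (supp h₂) (s₂.of_charpoly_eq (charpoly_reindex _ _))
    _ (hS.submatrix e.injective) (lyap L₁) (lyap L₂)

theorem GloballyIdentifiable.of_fromBlocks {E : Set ((m ⊕ n) × (m ⊕ n))} {A : Matrix m m ℝ}
    {D : Matrix n n ℝ} (hloops : ∀ k, (Sum.inr k, Sum.inr k) ∈ E) (hD : D.PosDef)
    (h : GloballyIdentifiable E (fromBlocks A 0 0 D)) :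
    GloballyIdentifiable (Prod.map Sum.inl Sum.inl ⁻¹' E) A := by
  intro M₁ M₂ h₁ s₁ h₂ s₂ S hS L₁ L₂
  set N : Matrix n n ℝ := diagonal fun _ => -(1 / 2)
  have supp : ∀ {M : Matrix m m ℝ}, InSupp (Prod.map Sum.inl Sum.inl ⁻¹' E) M →
      InSupp E (fromBlocks M 0 0 N) := by
    rintro M hM (i | i) (j | j) hij
    · exact hM i j hij
    · rfl
    · rfl
    · refine (diagonal_apply_ne _ fun hji => hij ?_ : N j i = 0)
      subst hji
      exact hloops j
  have stab : ∀ {M : Matrix m m ℝ}, IsStableMat M → IsStableMat (fromBlocks M 0 0 N) :=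
    fun hM => isStableMat_fromBlocks_zero₂₁ 0 hM <|
      isStableMat_diagonal (d := fun _ : n => -(1 / 2)) fun _ => by norm_num
  have lyap : ∀ {M}, M * S + S * Mᵀ + A = 0 →
      fromBlocks M 0 0 N * fromBlocks S 0 0 D + fromBlocks S 0 0 D * (fromBlocks M 0 0 N)ᵀ
        + fromBlocks A 0 0 D = 0 := fun {M} hL => by
    have hN : N * D + D * Nᵀ + D = 0 := by
      ext i j
      simp only [N, diagonal_transpose, Matrix.add_apply, diagonal_mul, mul_diagonal,
        Matrix.zero_apply]
      ring
    simp [fromBlocks_transpose, fromBlocks_multiply, fromBlocks_add, hL, hN]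
  simpa using congrArg toBlocks₁₁ <| h _ _ (supp h₁) (stab s₁) (supp h₂) (stab s₂) _
    (hS.fromBlocks_zero hD) (lyap L₁) (lyap L₂)

theorem GloballyIdentifiable.of_diagonal_mul_mul_diagonal {E : Set (n × n)} {C : Matrix n n ℝ}
    {d : n → ℝ} (hd : ∀ i, d i ≠ 0) (h : GloballyIdentifiable E (diagonal d * C * diagonal d)) :
    GloballyIdentifiable E C := by
  intro M₁ M₂ h₁ s₁ h₂ s₂ S hS L₁ L₂
  set D := diagonal d
  set D' := diagonal fun i => (d i)⁻¹
  have hD'D : D' * D = 1 := by simp [D, D', diagonal_mul_diagonal, inv_mul_cancel₀ (hd _)]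
  have hDD' : D * D' = 1 := by simp [D, D', diagonal_mul_diagonal, mul_inv_cancel₀ (hd _)]
  have supp : ∀ {M}, InSupp E M → InSupp E (D * M * D') := fun hM i j hij => by
    simp [D, D', diagonal_mul, mul_diagonal, hM i j hij]
  have stab : ∀ {M}, IsStableMat M → IsStableMat (D * M * D') := fun hM =>
    hM.of_charpoly_eq (by rw [charpoly_mul_comm, ← mul_assoc, hD'D, one_mul])
  have pd : (D * S * D).PosDef := by
    simpa [D] using hS.conjTranspose_mul_mul_same (B := D)
      (Function.LeftInverse.injective (g := D'.mulVec) fun x => by simp [hD'D])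
  have lyap : ∀ {M}, M * S + S * Mᵀ + C = 0 →
      D * M * D' * (D * S * D) + D * S * D * (D * M * D')ᵀ + D * C * D = 0 := fun {M} hL => by
    have hDt : Dᵀ = D := diagonal_transpose d
    have hD't : D'ᵀ = D' := diagonal_transpose _
    calc _ = D * (M * S + S * Mᵀ + C) * D := by
          simp only [transpose_mul, hDt, hD't, mul_add, add_mul, ← mul_assoc]
          simp only [mul_assoc _ D' D, hD'D, mul_assoc _ D D', hDD', mul_one]
      _ = 0 := by rw [hL, mul_zero, zero_mul]
  have key := h _ _ (supp h₁) (stab s₁) (supp h₂) (stab s₂) _ pd (lyap L₁) (lyap L₂)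
  have cancel : ∀ M, D' * (D * M * D') * D = M := fun M => by
    rw [← mul_assoc, ← mul_assoc, hD'D, one_mul, mul_assoc, hD'D, mul_one]
  rw [← cancel M₁, key, cancel]

end

theorem exists_diagonal_mul_mul_diagonal_eq {n : Type*} [Fintype n] [DecidableEq n]
    {C C' : Matrix n n ℝ} (hC : ∀ i, 0 < C i i) (hC' : ∀ i, 0 < C' i i)
    (hdiagC : ∀ i j, i ≠ j → C i j = 0) (hdiagC' : ∀ i j, i ≠ j → C' i j = 0) :
    ∃ d : n → ℝ, (∀ i, d i ≠ 0) ∧ C = diagonal d * C' * diagonal d := by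
  have hpos : ∀ i, 0 < C i i / C' i i := fun i => div_pos (hC i) (hC' i)
  refine ⟨fun i => √(C i i / C' i i), fun i => (Real.sqrt_pos.2 (hpos i)).ne', ?_⟩
  ext i j
  rcases eq_or_ne i j with rfl | hij
  · rw [mul_diagonal, diagonal_mul, mul_right_comm, Real.mul_self_sqrt (hpos i).le,
      div_mul_cancel₀ _ (hC' i).ne']
  · simp [diagonal_mul, mul_diagonal, hdiagC i j hij, hdiagC' i j hij]

theorem globally_identifiable_induced_subgraph_diagonal_general {p : ℕ}
    (E : Set (Fin p × Fin p)) (hloops : ∀ i : Fin p, (i, i) ∈ E)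
    (V' : Finset (Fin p)) (E' : Set (↥V' × ↥V'))
    (hsub : ∀ a b : ↥V', (a, b) ∈ E' → ((a : Fin p), (b : Fin p)) ∈ E)
    (C : Matrix (Fin p) (Fin p) ℝ) (hC : C.PosDef)
    (hdiagC : ∀ i j : Fin p, i ≠ j → C i j = 0)
    (hG : GloballyIdentifiable E C)
    (C' : Matrix ↥V' ↥V' ℝ) (hC' : C'.PosDef)
    (hdiagC' : ∀ a b : ↥V', a ≠ b → C' a b = 0) :
    GloballyIdentifiable E' C' := by
  set e := Equiv.sumCompl (· ∈ V')
  have hblocks : Matrix.reindex e.symm e.symm C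
      = fromBlocks (C.submatrix (↑) (↑)) 0 0 (C.submatrix (↑) (↑)) := by
    ext (a | a) (b | b) <;>
      simp only [e, reindex_apply, Equiv.symm_symm, submatrix_apply, Equiv.sumCompl_apply_inl,
        Equiv.sumCompl_apply_inr, fromBlocks_apply₁₁, fromBlocks_apply₁₂, fromBlocks_apply₂₁,
        fromBlocks_apply₂₂, Matrix.zero_apply]
    · exact hdiagC _ _ fun h => b.2 (h ▸ a.2)
    · exact hdiagC _ _ fun h => a.2 (h ▸ b.2)
  have hV' : GloballyIdentifiable E' (C.submatrix ((↑) : V' → Fin p) (↑)) :=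
    ((hblocks ▸ hG.reindex e.symm).of_fromBlocks (fun k => by simpa [e] using hloops k)
      (hC.submatrix Subtype.val_injective)).mono fun ⟨a, b⟩ hab => hsub a b hab
  obtain ⟨d, hd, hCd⟩ := exists_diagonal_mul_mul_diagonal_eq
    (C := C.submatrix ((↑) : V' → Fin p) (↑)) (fun _ => hC.diag_pos)
    (fun _ => hC'.diag_pos) (fun a b hab => hdiagC _ _ (Subtype.coe_ne_coe.2 hab)) hdiagC'
  exact (hCd ▸ hV').of_diagonal_mul_mul_diagonal hd

/-- for diagonal volatility matrices, global identifiability passes to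
subgraphs obtained by removing both edges and vertices. -/
theorem globally_identifiable_induced_subgraph_diagonal {p : ℕ}
    (E : Set (Fin p × Fin p)) (hloops : ∀ i : Fin p, (i, i) ∈ E)
    (V' : Finset (Fin p)) (E' : Set (↥V' × ↥V'))
    (hloops' : ∀ v : ↥V', (v, v) ∈ E')
    (hsub : ∀ a b : ↥V', (a, b) ∈ E' → ((a : Fin p), (b : Fin p)) ∈ E)
    (C : Matrix (Fin p) (Fin p) ℝ) (hC : C.PosDef)
    (hdiagC : ∀ i j : Fin p, i ≠ j → C i j = 0)
    (hG : GloballyIdentifiable E C)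
    (C' : Matrix ↥V' ↥V' ℝ) (hC' : C'.PosDef)
    (hdiagC' : ∀ a b : ↥V', a ≠ b → C' a b = 0) :
    GloballyIdentifiable E' C' :=
  globally_identifiable_induced_subgraph_diagonal_general E hloops V' E' hsub C hC hdiagC hG C' hC'
    hdiagC'
end

section
/- Let G=(V,E) be a directed graph on V=[p] containing all self-loops, and let C be a diagonal positive definite p×p matrix. If the graphical continuous Lyapunov model M_{G,C} is globally identifiable, then G is simple, i.e., there are no two distinct nodes i,j with both (i,j)∈E and (j,i)∈E. -/
open Matrix MeasureTheory

lemma stable_aux {p : ℕ} (C M : Matrix (Fin p) (Fin p) ℝ)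
    (hd : ∀ k : Fin p, 0 < C k k)
    (hdiag : ∀ i j : Fin p, i ≠ j → C i j = 0)
    (h : M * C + C * Mᵀ = (-2 : ℝ) • C) : IsStableMat M := by
  intro μ hμ
  set A := M.map (algebraMap ℝ ℂ) with hA
  have hdet : (μ • (1 : Matrix (Fin p) (Fin p) ℂ) - A).det = 0 := by
    rw [spectrum.mem_iff] at hμ
    by_contra hne
    exact hμ (by
      rw [Matrix.isUnit_iff_isUnit_det]
      simpa [Algebra.algebraMap_eq_smul_one] using isUnit_iff_ne_zero.mpr hne)
  have hdetT : (μ • (1 : Matrix (Fin p) (Fin p) ℂ) - Aᵀ).det = 0 := by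
    have := congrArg Matrix.det (by
      simp [Matrix.transpose_sub, Matrix.transpose_smul] :
      (μ • (1 : Matrix (Fin p) (Fin p) ℂ) - A)ᵀ = μ • 1 - Aᵀ)
    rw [Matrix.det_transpose] at this
    rw [← this, hdet]
  obtain ⟨v, hv0, hv⟩ := (Matrix.exists_mulVec_eq_zero_iff).mpr hdetT
  have hev : Aᵀ *ᵥ v = μ • v := by
    have := hv
    rw [Matrix.sub_mulVec, sub_eq_zero] at this
    rw [← this, Matrix.smul_mulVec, Matrix.one_mulVec]
  -- complexified C
  set Cc := C.map (algebraMap ℝ ℂ) with hCc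
  have hcomplex : A * Cc + Cc * Aᵀ = (-2 : ℂ) • Cc := by
    have := congrArg (fun X => X.map (algebraMap ℝ ℂ)) h
    have hs : ((-2 : ℝ) • C).map (algebraMap ℝ ℂ) = (-2 : ℂ) • Cc := by
      ext a b; simp [hCc, Matrix.map_apply, Matrix.smul_apply]
    rw [Matrix.map_add _ (by simp), Matrix.map_mul (f := algebraMap ℝ ℂ), Matrix.map_mul (f := algebraMap ℝ ℂ), hs] at this
    rw [← Matrix.transpose_map]
    exact this
  -- the quadratic form q
  set q : ℂ := star v ⬝ᵥ (Cc *ᵥ v) with hq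
  -- conj-symmetry of A on real entries
  have hAstar : Aᵀ *ᵥ (star v) = star (Aᵀ *ᵥ v) := by
    funext k
    simp [Matrix.mulVec, dotProduct, hA, Matrix.map_apply, map_sum]
  have key : (starRingEnd ℂ) μ * q + μ * q = (-2 : ℂ) * q := by
    have h1 : star v ⬝ᵥ ((A * Cc + Cc * Aᵀ) *ᵥ v) = (starRingEnd ℂ) μ * q + μ * q := by
      rw [Matrix.add_mulVec, dotProduct_add, ← Matrix.mulVec_mulVec, ← Matrix.mulVec_mulVec]
      congr 1
      · rw [Matrix.dotProduct_mulVec, ← Matrix.mulVec_transpose, hAstar, hev]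
        simp [smul_dotProduct, hq, smul_eq_mul]
      · rw [hev, Matrix.mulVec_smul, dotProduct_smul]
        simp [hq, smul_eq_mul]
    have h2 : star v ⬝ᵥ ((A * Cc + Cc * Aᵀ) *ᵥ v) = (-2 : ℂ) * q := by
      rw [hcomplex, Matrix.smul_mulVec, dotProduct_smul]
      simp [hq, smul_eq_mul]
    rw [← h1, h2]
  -- q has positive real part
  have hqval : q = ∑ k, ((C k k * Complex.normSq (v k) : ℝ) : ℂ) := by
    rw [hq]
    unfold dotProduct
    refine Finset.sum_congr rfl fun k _ => ?_
    have hmv : (Cc *ᵥ v) k = (C k k : ℂ) * v k := by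
      unfold Matrix.mulVec dotProduct
      rw [Finset.sum_eq_single k]
      · simp [hCc, Matrix.map_apply]
      · intro b _ hb
        simp [hCc, Matrix.map_apply, hdiag k b (Ne.symm hb)]
      · simp
    rw [hmv]
    simp [Complex.normSq_eq_conj_mul_self]
    ring
  have hqre : 0 < q.re := by
    rw [hqval]
    rw [Complex.re_sum]
    simp only [Complex.ofReal_re]
    obtain ⟨k0, hk0⟩ := Function.ne_iff.mp hv0
    refine Finset.sum_pos' (fun k _ => ?_) ⟨k0, Finset.mem_univ _, ?_⟩
    · exact mul_nonneg (hd k).le (Complex.normSq_nonneg _)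
    · exact mul_pos (hd k0) (by simpa [Complex.normSq_pos] using hk0)
  have hqne : q ≠ 0 := fun h0 => by simp [h0] at hqre
  have : (starRingEnd ℂ) μ + μ = (-2 : ℂ) := by
    have := key
    field_simp at this
    rcases mul_eq_mul_right_iff.mp (by linear_combination key :
      ((starRingEnd ℂ) μ + μ) * q = (-2 : ℂ) * q) with h' | h'
    · exact h'
    · exact absurd h' hqne
  have hre := congrArg Complex.re this
  have h2 : Complex.re 2 = 2 := by norm_num
  simp only [Complex.add_re, Complex.conj_re, Complex.neg_re, h2] at hre
  linarith

/-- for diagonal positive definite `C`, global identifiability of the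
model forces the graph to be simple. -/
theorem globally_identifiable_implies_simple_of_diagonal {p : ℕ}
    (E : Set (Fin p × Fin p)) (hloops : ∀ i : Fin p, (i, i) ∈ E)
    (C : Matrix (Fin p) (Fin p) ℝ) (hC : C.PosDef)
    (hdiag : ∀ i j : Fin p, i ≠ j → C i j = 0)
    (hG : GloballyIdentifiable E C) :
    IsSimpleDigraph E := by
  intro i j hij hijE
  by_contra hjiE'
  have hjiE : (j, i) ∈ E := hjiE'
  -- diagonal entries of C are positive
  have hd : ∀ k : Fin p, 0 < C k k := by
    intro k
    have hne : (Pi.single k 1 : Fin p → ℝ) ≠ 0 := by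
      intro h0
      have := congrFun h0 k
      simp at this
    have h0 := hC.dotProduct_mulVec_pos hne
    have h1 : (0:ℝ) < ∑ x, (Pi.single k 1 : Fin p → ℝ) x * C x k := by
      simpa [Matrix.mulVec_single, dotProduct] using h0
    rwa [Finset.sum_eq_single k (fun b _ hb => by simp [Pi.single_eq_of_ne hb])
      (by simp), Pi.single_eq_same, one_mul] at h1
  -- the perturbation matrix
  set A : Matrix (Fin p) (Fin p) ℝ := fun k l =>
    if k = j ∧ l = i then C j j else if k = i ∧ l = j then -(C i i) else 0 with hA
  have hAentry : ∀ k l, (k = j ∧ l = i → A k l = C j j) := by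
    intro k l ⟨h1, h2⟩; simp [hA, h1, h2]
  -- key algebraic fact: A C + C Aᵀ = 0
  have hmulC : ∀ k l, (A * C) k l = A k l * C l l := by
    intro k l
    rw [Matrix.mul_apply, Finset.sum_eq_single l]
    · intro b _ hb; rw [hdiag b l hb, mul_zero]
    · simp
  have hCmul : ∀ k l, (C * Aᵀ) k l = C k k * A l k := by
    intro k l
    rw [Matrix.mul_apply, Finset.sum_eq_single k]
    · simp [Matrix.transpose_apply]
    · intro b _ hb; rw [hdiag k b (Ne.symm hb), zero_mul]
    · simp
  have hACCA : A * C + C * Aᵀ = 0 := by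
    ext k l
    rw [Matrix.add_apply, hmulC, hCmul, Matrix.zero_apply, hA]
    by_cases h1 : k = j ∧ l = i
    · obtain ⟨hk, hl⟩ := h1
      subst hk; subst hl
      simp [hij, Ne.symm hij]
    · by_cases h2 : k = i ∧ l = j
      · obtain ⟨hk, hl⟩ := h2
        subst hk; subst hl
        simp [hij, Ne.symm hij]
      · have hAkl : (if k = j ∧ l = i then C j j else if k = i ∧ l = j then -(C i i) else 0) = 0 := by
          simp [h1, h2]
        have hAlk : (if l = j ∧ k = i then C j j else if l = i ∧ k = j then -(C i i) else 0) = 0 := by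
          split_ifs with g1 g2
          · exact absurd ⟨g1.2, g1.1⟩ h2
          · exact absurd ⟨g2.2, g2.1⟩ h1
          · rfl
        simp only [hAkl, hAlk, zero_mul, mul_zero, add_zero]
  -- S = C/2
  set S : Matrix (Fin p) (Fin p) ℝ := (2⁻¹ : ℝ) • C with hS
  have hSpd : S.PosDef := by
    rw [Matrix.posDef_iff_dotProduct_mulVec]
    constructor
    · show Sᴴ = S
      ext a b
      have := congrFun (congrFun hC.1 a) b
      simp only [conjTranspose_apply, star_trivial] at this ⊢
      simp [hS, Matrix.smul_apply, this]
    · intro x hx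
      have := hC.dotProduct_mulVec_pos hx
      rw [hS, Matrix.smul_mulVec, dotProduct_smul]
      positivity
  -- M₁ = -1
  have heq1 : (-1 : Matrix (Fin p) (Fin p) ℝ) * S + S * (-1 : Matrix (Fin p) (Fin p) ℝ)ᵀ + C = 0 := by
    rw [Matrix.transpose_neg, Matrix.transpose_one]
    ext a b
    simp [hS, Matrix.add_apply, Matrix.neg_apply, Matrix.smul_apply]
    ring
  have hlyap1 : (-1 : Matrix (Fin p) (Fin p) ℝ) * C + C * (-1 : Matrix (Fin p) (Fin p) ℝ)ᵀ = (-2 : ℝ) • C := by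
    rw [Matrix.transpose_neg, Matrix.transpose_one]
    ext a b
    simp [Matrix.add_apply, Matrix.neg_apply, Matrix.smul_apply]
    ring
  -- M₂ = -1 + A
  have heq2 : (-1 + A) * S + S * (-1 + A)ᵀ + C = 0 := by
    have hAS : A * S + S * Aᵀ = 0 := by
      have : A * S + S * Aᵀ = (2⁻¹ : ℝ) • (A * C + C * Aᵀ) := by
        rw [hS, Matrix.mul_smul, Matrix.smul_mul, smul_add]
      rw [this, hACCA, smul_zero]
    rw [Matrix.transpose_add, Matrix.transpose_neg, Matrix.transpose_one,
      add_mul, mul_add]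
    have := heq1
    rw [Matrix.transpose_neg, Matrix.transpose_one] at this
    calc (-1) * S + A * S + ((S * -1) + S * Aᵀ) + C
        = ((-1) * S + S * (-1) + C) + (A * S + S * Aᵀ) := by abel
      _ = 0 := by rw [this, hAS, add_zero]
  have hlyap2 : (-1 + A) * C + C * (-1 + A)ᵀ = (-2 : ℝ) • C := by
    rw [Matrix.transpose_add, Matrix.transpose_neg, Matrix.transpose_one,
      add_mul, mul_add]
    calc (-1) * C + A * C + ((C * -1) + C * Aᵀ) 
        = ((-1) * C + C * (-1)) + (A * C + C * Aᵀ) := by abel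
      _ = (-2 : ℝ) • C := by
          rw [hACCA, add_zero]
          ext a b
          simp [Matrix.add_apply, Matrix.neg_apply, Matrix.smul_apply]
          ring
  -- supports
  have hsupp1 : InSupp E (-1 : Matrix (Fin p) (Fin p) ℝ) := by
    intro a b hab
    have : a ≠ b := fun h => hab (h ▸ hloops a)
    simp [Matrix.neg_apply, Matrix.one_apply, Ne.symm this]
  have hsupp2 : InSupp E (-1 + A) := by
    intro a b hab
    have hne : a ≠ b := fun h => hab (h ▸ hloops a)
    have hA0 : A b a = 0 := by
      show (if b = j ∧ a = i then C j j else if b = i ∧ a = j then -(C i i) else 0) = 0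
      split_ifs with g1 g2
      · exact absurd hijE (by rw [g1.2, g1.1] at hab; exact hab)
      · exact absurd hjiE (by rw [g2.2, g2.1] at hab; exact hab)
      · rfl
    simp [Matrix.add_apply, Matrix.neg_apply, Matrix.one_apply, Ne.symm hne, hA0]
  -- stability
  have hst1 : IsStableMat (-1 : Matrix (Fin p) (Fin p) ℝ) := stable_aux C _ hd hdiag hlyap1
  have hst2 : IsStableMat (-1 + A) := stable_aux C _ hd hdiag hlyap2
  -- identifiability gives contradiction
  have hEq := hG (-1) (-1 + A) hsupp1 hst1 hsupp2 hst2 S hSpd heq1 heq2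
  have h1 : ((-1 : Matrix (Fin p) (Fin p) ℝ)) j i = 0 := by
    simp [Matrix.neg_apply, Matrix.one_apply_ne (Ne.symm hij)]
  have h2 : ((-1 : Matrix (Fin p) (Fin p) ℝ) + A) j i = C j j := by
    simp [Matrix.add_apply, Matrix.neg_apply, Matrix.one_apply_ne (Ne.symm hij),
      hAentry j i ⟨rfl, rfl⟩]
  have hco := congrFun (congrFun hEq j) i
  rw [h1, h2] at hco
  exact absurd hco.symm (ne_of_gt (hd j))
end
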